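/- If f ∈ BV¹ then for every integer n ≥ 1, n · sup_{x∈[−1,1]} |B_n(f,x) − f(x)| ≤ T_{f'}[−1,1]/2 + max { sup_{x∈(−1,1)} |O(f,x)|, sup_{x∈(−1,1)} |E(f,x)| }. -/

import Mathlib

/-!
Away from the nodes, `B_n(f,x) - f(x) = -S / D_n(x)` with `S = Σ_k (-1)^k s_k`, where `s_k` is
the slope of `f` between `x` and `x_{k,n}`.

With `t = n(x+1)/2 ∈ (i, i+1)`, the terms of `D_n(x)` on either side of `t` form two alternating
sums of decreasing terms, bounded below by `1/a - 1/(a+1)` where `a` is the distance from `t` to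
`i` resp. `i+1`; this gives `|D_n(x)| ≥ n`.

Summation by parts gives `2S = s_0 + (-1)^n s_n + Σ_k (-1)^k (s_k - s_{k+1})`, and the boundary
term is `-2E(f,x)` or `-2O(f,x)` according to the parity of `n`. Finally
`s_k = ∫₀¹ f'(x + t(x_{k,n} - x)) dt`, and for fixed `t` the points `x + t(x_{k,n} - x)` increase
with `k`, so `Σ_k |s_{k+1} - s_k| ≤ T_{f'}[-1,1]`.
-/

open Filter Set MeasureTheory

noncomputable section

/-- Equally spaced nodes `x_{k,n} = 2k/n - 1`. -/
def node (n k : ℕ) : ℝ := 2 * k / n - 1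

/-- `x` is one of the nodes `x_{0,n}, …, x_{n,n}`. -/
def isNode (n : ℕ) (x : ℝ) : Prop := ∃ k ≤ n, x = node n k

/-- Denominator of Berrut's interpolant. -/
def Dden (n : ℕ) (x : ℝ) : ℝ :=
  ∑ k ∈ Finset.range (n + 1), (-1 : ℝ) ^ k / (x - node n k)

/-- Numerator of Berrut's interpolant. -/
def Nnum (f : ℝ → ℝ) (n : ℕ) (x : ℝ) : ℝ :=
  ∑ k ∈ Finset.range (n + 1), (-1 : ℝ) ^ k * f (node n k) / (x - node n k)

open Classical in
/-- Berrut's barycentric interpolant. -/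
def berrut (f : ℝ → ℝ) (n : ℕ) (x : ℝ) : ℝ :=
  if isNode n x then f x else Nnum f n x / Dden n x

/-- The odd bias function `O(f,x)`. -/
def Ofun (f : ℝ → ℝ) (x : ℝ) : ℝ :=
  (f x - f 1) / (2 * (x - 1)) - (f x - f (-1)) / (2 * (x + 1))

/-- The even bias function `E(f,x)`. -/
def Efun (f : ℝ → ℝ) (x : ℝ) : ℝ :=
  (f 1 - f x) / (2 * (x - 1)) + (f (-1) - f x) / (2 * (x + 1))

/-- `f` is differentiable on `[-1,1]` with absolutely continuous derivative. -/
def AC1 (f : ℝ → ℝ) : Prop :=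
  ∃ f' : ℝ → ℝ,
    (∀ x ∈ Set.Icc (-1 : ℝ) 1, HasDerivWithinAt f (f' x) (Set.Icc (-1 : ℝ) 1) x) ∧
    ∃ g : ℝ → ℝ, IntervalIntegrable g volume (-1) 1 ∧
      ∀ x ∈ Set.Icc (-1 : ℝ) 1, f' x = f' (-1) + ∫ t in (-1 : ℝ)..x, g t

/-- `x` is regular for the sequence `n j`: eventually never a node. -/
def Regular (n : ℕ → ℕ) (x : ℝ) : Prop := ∃ j₀, ∀ j ≥ j₀, ¬ isNode (n j) x

/-- The function `A(x) = Σ (-1)^k (4k+2)/((2k+1)^2 - x)`. -/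
def Afun (x : ℝ) : ℝ := ∑' k : ℕ, (-1 : ℝ) ^ k * (4 * k + 2) / ((2 * k + 1) ^ 2 - x)

/-- `ι_n(x) = ⌊n(x+1)/2⌋`. -/
def iota (n : ℕ) (x : ℝ) : ℤ := ⌊(n : ℝ) * (x + 1) / 2⌋

/-- `ρ_n(x) = n(x - x_{ι_n(x),n}) - 1 = n(x+1) - 2 ι_n(x) - 1`. -/
def rho (n : ℕ) (x : ℝ) : ℝ := (n : ℝ) * (x + 1) - 2 * (iota n x : ℝ) - 1

open Classical in
/-- The de-biased numerator `Δ_n(f,x)`. -/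
def Delta (f : ℝ → ℝ) (n : ℕ) (x : ℝ) : ℝ :=
  if isNode n x then 0 else
    (f (-1) - f x) / (2 * (x + 1)) + (-1 : ℝ) ^ n * (f 1 - f x) / (2 * (x - 1)) +
      (1 / (n : ℝ)) * ∑ k ∈ Finset.Ioo 0 n, (-1 : ℝ) ^ k * (f (node n k) - f x) / (x - node n k)

end

theorem alternating_sum_range_succ (c : ℕ → ℝ) (M : ℕ) :
    ∑ m ∈ Finset.range (M + 1), (-1) ^ m * c m =
      c 0 - ∑ m ∈ Finset.range M, (-1) ^ m * c (m + 1) := by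
  rw [Finset.sum_range_succ', sub_eq_add_neg, add_comm, ← Finset.sum_neg_distrib]
  simp [pow_succ]

theorem Antitone.alternating_sum_mem_Icc {c : ℕ → ℝ} (hc : Antitone c) (h0 : ∀ m, 0 ≤ c m)
    (M : ℕ) : ∑ m ∈ Finset.range M, (-1) ^ m * c m ∈ Icc 0 (c 0) := by
  induction M generalizing c with
  | zero => simpa using h0 0
  | succ M ih =>
    have hshift := ih (c := fun m => c (m + 1)) (fun _ _ h => hc (by omega)) fun m => h0 (m + 1)
    rw [alternating_sum_range_succ]
    exact ⟨by linarith [hshift.2, hc (Nat.zero_le 1)], by linarith [hshift.1]⟩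

theorem Antitone.sub_le_alternating_sum {c : ℕ → ℝ} (hc : Antitone c) (h0 : ∀ m, 0 ≤ c m)
    (M : ℕ) : c 0 - c 1 ≤ ∑ m ∈ Finset.range (M + 1), (-1) ^ m * c m := by
  have hshift := Antitone.alternating_sum_mem_Icc (c := fun m => c (m + 1))
    (fun _ _ h => hc (by omega)) (fun m => h0 (m + 1)) M
  rw [alternating_sum_range_succ]
  linarith [hshift.2]

theorem abs_alternating_sum_le (c : ℕ → ℝ) (n : ℕ) :
    |∑ k ∈ Finset.range (n + 1), (-1) ^ k * c k| ≤
      (|c 0 + (-1) ^ n * c n| + ∑ k ∈ Finset.range n, |c (k + 1) - c k|) / 2 := by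
  have htwice : 2 * ∑ k ∈ Finset.range (n + 1), (-1) ^ k * c k =
      c 0 + (-1) ^ n * c n - ∑ k ∈ Finset.range n, (-1) ^ k * (c (k + 1) - c k) := by
    have := alternating_sum_range_succ c n
    rw [Finset.sum_range_succ] at this ⊢
    simp only [mul_sub, Finset.sum_sub_distrib]
    linarith
  have hdiff : |∑ k ∈ Finset.range n, (-1) ^ k * (c (k + 1) - c k)| ≤
      ∑ k ∈ Finset.range n, |c (k + 1) - c k| :=
    (Finset.abs_sum_le_sum_abs _ _).trans_eq (by simp [abs_mul])
  rw [le_div_iff₀ two_pos, ← abs_two, ← abs_mul, mul_comm, htwice]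
  exact (abs_sub _ _).trans (by linarith)

theorem inv_sub_inv_add_one_le_alternating_sum {a : ℝ} (ha : 0 < a) (M : ℕ) :
    a⁻¹ - (a + 1)⁻¹ ≤ ∑ m ∈ Finset.range (M + 1), (-1) ^ m / (a + m) := by
  have hanti : Antitone fun m : ℕ => (a + m)⁻¹ := fun m m' h =>
    inv_anti₀ (by positivity) (by gcongr)
  simpa [div_eq_mul_inv] using hanti.sub_le_alternating_sum (fun m => by positivity) M

theorem neg_one_pow_mul_alternating_sum_div (t : ℝ) {i n : ℕ} (hi : i < n) :
    (-1) ^ i * ∑ k ∈ Finset.range (n + 1), (-1) ^ k / (t - k) =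
      ∑ m ∈ Finset.range (i + 1), (-1) ^ m / (t - i + m) +
        ∑ m ∈ Finset.range (n - i), (-1) ^ m / (i + 1 - t + m) := by
  rw [show n + 1 = (i + 1) + (n - i) by omega, Finset.sum_range_add, mul_add, Finset.mul_sum,
    Finset.mul_sum, ← Finset.sum_range_reflect]
  congr 1 <;> refine Finset.sum_congr rfl fun m hm => ?_
  · obtain ⟨j, rfl⟩ : ∃ j, i = j + m := ⟨i - m, by simp at hm; omega⟩
    have hsq : ((-1 : ℝ) ^ j) ^ 2 = 1 := by simp [← pow_mul, pow_mul']
    rw [show j + m + 1 - 1 - m = j by omega]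
    push_cast
    linear_combination ((-1) ^ m / (t - j)) * hsq
  · have hsq : ((-1 : ℝ) ^ i) ^ 2 = 1 := by simp [← pow_mul, pow_mul']
    rw [show t - ((i + 1 + m : ℕ) : ℝ) = -(i + 1 - t + m) by push_cast; ring, div_neg]
    linear_combination ((-1) ^ m / (i + 1 - t + m)) * hsq

theorem two_le_inv_sub_inv_add_one_add {a b : ℝ} (ha : 0 < a) (hb : 0 < b) (hab : a + b = 1) :
    2 ≤ (a⁻¹ - (a + 1)⁻¹) + (b⁻¹ - (b + 1)⁻¹) := by
  rw [inv_sub_inv (by positivity) (by positivity), inv_sub_inv (by positivity) (by positivity),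
    div_add_div _ _ (by positivity) (by positivity), le_div_iff₀ (by positivity)]
  have hu : a * b ≤ 1 / 4 := by nlinarith [sq_nonneg (a - b)]
  obtain rfl : b = 1 - a := by linarith
  nlinarith [mul_pos ha hb]

theorem two_le_abs_alternating_sum_div {t : ℝ} {i n : ℕ} (hi : i < n) (hit : (i : ℝ) < t)
    (hti : t < i + 1) : 2 ≤ |∑ k ∈ Finset.range (n + 1), (-1) ^ k / (t - k)| := by
  obtain ⟨M, hM⟩ : ∃ M, n - i = M + 1 := ⟨n - i - 1, by omega⟩
  have hleft := inv_sub_inv_add_one_le_alternating_sum (sub_pos.2 hit) i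
  have hright := inv_sub_inv_add_one_le_alternating_sum (a := i + 1 - t) (by linarith) M
  have hab := two_le_inv_sub_inv_add_one_add (a := t - i) (b := i + 1 - t) (sub_pos.2 hit)
    (by linarith) (by ring)
  calc (2 : ℝ) ≤ (-1) ^ i * ∑ k ∈ Finset.range (n + 1), (-1) ^ k / (t - k) := by
        rw [neg_one_pow_mul_alternating_sum_div t hi, hM]
        linarith
    _ ≤ |(-1) ^ i * ∑ k ∈ Finset.range (n + 1), (-1) ^ k / (t - k)| := le_abs_self _
    _ = |∑ k ∈ Finset.range (n + 1), (-1) ^ k / (t - k)| := by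
        rw [abs_mul, abs_neg_one_pow, one_mul]

theorem node_zero (n : ℕ) : node n 0 = -1 := by simp [node]

theorem node_self {n : ℕ} (hn : 1 ≤ n) : node n n = 1 := by
  rw [node, mul_div_assoc, div_self (by positivity)]
  norm_num

theorem node_monotone (n : ℕ) : Monotone (node n) := fun k l h => by
  unfold node
  gcongr

theorem node_mem_Icc {n k : ℕ} (hn : 1 ≤ n) (hk : k ≤ n) : node n k ∈ Icc (-1 : ℝ) 1 := by
  rw [← node_zero n, ← node_self hn]
  exact ⟨node_monotone n k.zero_le, node_monotone n hk⟩

theorem mem_Ioo_of_not_isNode {n : ℕ} (hn : 1 ≤ n) {x : ℝ} (hx : x ∈ Icc (-1 : ℝ) 1)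
    (h : ¬ isNode n x) : x ∈ Ioo (-1 : ℝ) 1 := by
  refine ⟨hx.1.lt_of_ne fun hx0 => h ⟨0, n.zero_le, ?_⟩,
    hx.2.lt_of_ne fun hx1 => h ⟨n, le_rfl, ?_⟩⟩
  · rw [node_zero, hx0]
  · rw [node_self hn, hx1]

theorem Dden_eq_mul_sum {n : ℕ} (hn : 1 ≤ n) (x : ℝ) :
    Dden n x = n / 2 * ∑ k ∈ Finset.range (n + 1), (-1) ^ k / (n * (x + 1) / 2 - k) := by
  have : (n : ℝ) ≠ 0 := by positivity
  rw [Dden, Finset.mul_sum]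
  refine Finset.sum_congr rfl fun k _ => ?_
  rw [show x - node n k = 2 / n * (n * (x + 1) / 2 - k) by unfold node; field_simp; ring]
  field_simp

theorem le_abs_Dden {n : ℕ} (hn : 1 ≤ n) {x : ℝ} (hx : x ∈ Ioo (-1 : ℝ) 1)
    (hnode : ¬ isNode n x) : (n : ℝ) ≤ |Dden n x| := by
  have hn0 : (0 : ℝ) < n := by positivity
  set t := (n : ℝ) * (x + 1) / 2 with ht
  have ht0 : 0 ≤ t := by nlinarith [hx.1]
  have htn : t < n := by nlinarith [hx.2]
  set i := ⌊t⌋₊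
  have hit : (i : ℝ) < t := by
    refine (Nat.floor_le ht0).lt_of_ne fun h => hnode ⟨i, ?_, ?_⟩
    · exact_mod_cast (Nat.floor_le ht0).trans htn.le
    · rw [node, h]
      field_simp
      ring
  have hin : i < n := by exact_mod_cast hit.trans htn
  have := two_le_abs_alternating_sum_div hin hit (Nat.lt_floor_add_one t)
  rw [Dden_eq_mul_sum hn, abs_mul, abs_of_pos (by positivity)]
  nlinarith

theorem BoundedVariationOn.intervalIntegrable {φ : ℝ → ℝ} {a b : ℝ}
    (h : BoundedVariationOn φ (uIcc a b)) : IntervalIntegrable φ volume a b := by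
  obtain ⟨p, q, hp, hq, rfl⟩ := h.locallyBoundedVariationOn.exists_monotoneOn_sub_monotoneOn
  exact hp.intervalIntegrable.sub hq.intervalIntegrable

theorem BoundedVariationOn.sum_abs_sub_le {α : Type*} [LinearOrder α] {φ : α → ℝ} {s : Set α}
    (h : BoundedVariationOn φ s) {u : ℕ → α} {n : ℕ} (hu : MonotoneOn u (Icc 0 n))
    (us : ∀ i ∈ Icc 0 n, u i ∈ s) :
    ∑ i ∈ Finset.range n, |φ (u (i + 1)) - φ (u i)| ≤ (eVariationOn φ s).toReal := by
  have hsum := ENNReal.toReal_mono h (eVariationOn.sum_le_of_monotoneOn_Icc (f := φ) hu us)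
  rw [← Finset.range_eq_Ico, ENNReal.toReal_sum fun i _ => edist_ne_top _ _] at hsum
  simpa [edist_dist, Real.dist_eq] using hsum

theorem BoundedVariationOn.abs_le_abs_add {α : Type*} [LinearOrder α] {φ : α → ℝ} {s : Set α}
    (h : BoundedVariationOn φ s) {a y : α} (ha : a ∈ s) (hy : y ∈ s) :
    |φ y| ≤ |φ a| + (eVariationOn φ s).toReal := by
  have := h.dist_le hy ha
  rw [Real.dist_eq] at this
  linarith [abs_sub_abs_le_abs_sub (φ y) (φ a)]

theorem IntervalIntegrable.comp_add_sub_mul {φ : ℝ → ℝ} {x p : ℝ}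
    (h : IntervalIntegrable φ volume x p) :
    IntervalIntegrable (fun t => φ (x + (p - x) * t)) volume 0 1 := by
  rcases eq_or_ne p x with rfl | hpx
  · simp
  · simpa [sub_ne_zero.2 hpx] using (h.comp_add_left x).comp_mul_left (c := p - x)

theorem integral_eq_sub_of_hasDerivWithinAt_Icc {f f' : ℝ → ℝ} {a b u v : ℝ}
    (hf : ∀ y ∈ Icc a b, HasDerivWithinAt f (f' y) (Icc a b) y)
    (hint : IntervalIntegrable f' volume a b) (hu : u ∈ Icc a b) (hv : v ∈ Icc a b) :
    ∫ y in u..v, f' y = f v - f u := by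
  have hsub : uIcc u v ⊆ Icc a b := uIcc_subset_Icc hu hv
  refine intervalIntegral.integral_eq_sub_of_hasDeriv_right
    (fun y hy => (hf y (hsub hy)).continuousWithinAt.mono hsub) (fun y hy => ?_)
    (hint.mono_set (by rwa [uIcc_of_le (hu.1.trans hu.2)]))
  have hy' : y ∈ Ioo a b :=
    ⟨(le_min hu.1 hv.1).trans_lt hy.1, hy.2.trans_le (max_le hu.2 hv.2)⟩
  exact ((hf y (Ioo_subset_Icc_self hy')).hasDerivAt (Icc_mem_nhds hy'.1 hy'.2)).hasDerivWithinAt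

theorem slope_eq_integral_comp_add_sub_mul {f f' : ℝ → ℝ} {a b x p : ℝ}
    (hf : ∀ y ∈ Icc a b, HasDerivWithinAt f (f' y) (Icc a b) y)
    (hint : IntervalIntegrable f' volume a b) (hx : x ∈ Icc a b) (hp : p ∈ Icc a b)
    (hpx : p ≠ x) : slope f x p = ∫ t in (0 : ℝ)..1, f' (x + (p - x) * t) := by
  rw [intervalIntegral.integral_comp_add_mul _ (sub_ne_zero.2 hpx), mul_zero, add_zero, mul_one,
    add_sub_cancel, integral_eq_sub_of_hasDerivWithinAt_Icc hf hint hx hp, slope_def_field,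
    smul_eq_mul, div_eq_inv_mul]

theorem sum_abs_sub_integral_comp_add_sub_mul_le {φ : ℝ → ℝ} {s : Set ℝ}
    (hφ : BoundedVariationOn φ s) (hs : Convex ℝ s) {x : ℝ} (hx : x ∈ s) {p : ℕ → ℝ} {n : ℕ}
    (hp : MonotoneOn p (Icc 0 n)) (hps : ∀ k ∈ Icc 0 n, p k ∈ s) :
    ∑ k ∈ Finset.range n, |(∫ t in (0 : ℝ)..1, φ (x + (p (k + 1) - x) * t)) -
      ∫ t in (0 : ℝ)..1, φ (x + (p k - x) * t)| ≤ (eVariationOn φ s).toReal := by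
  set F : ℕ → ℝ → ℝ := fun k t => φ (x + (p k - x) * t)
  have hF : ∀ k ∈ Icc 0 n, IntervalIntegrable (F k) volume 0 1 := fun k hk =>
    ((hφ.mono (hs.ordConnected.uIcc_subset hx (hps k hk))).intervalIntegrable).comp_add_sub_mul
  have hdiff : ∀ k ∈ Finset.range n,
      IntervalIntegrable (fun t => |F (k + 1) t - F k t|) volume 0 1 := fun k hk => by
    have hk : k < n := Finset.mem_range.1 hk
    exact ((hF (k + 1) ⟨(k + 1).zero_le, hk⟩).sub (hF k ⟨k.zero_le, hk.le⟩)).abs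
  have hpointwise : ∀ t ∈ Icc (0 : ℝ) 1,
      ∑ k ∈ Finset.range n, |F (k + 1) t - F k t| ≤ (eVariationOn φ s).toReal := fun t ht =>
    hφ.sum_abs_sub_le (u := fun k => x + (p k - x) * t)
      (fun k hk l hl hkl => by dsimp only; gcongr; exacts [ht.1, hp hk hl hkl])
      (fun k hk => by simpa [mul_comm] using hs.add_smul_sub_mem hx (hps k hk) ht)
  calc ∑ k ∈ Finset.range n, |(∫ t in (0 : ℝ)..1, F (k + 1) t) - ∫ t in (0 : ℝ)..1, F k t|
      = ∑ k ∈ Finset.range n, |∫ t in (0 : ℝ)..1, F (k + 1) t - F k t| := by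
        refine Finset.sum_congr rfl fun k hk => ?_
        have hk : k < n := Finset.mem_range.1 hk
        rw [intervalIntegral.integral_sub (hF (k + 1) ⟨(k + 1).zero_le, hk⟩)
          (hF k ⟨k.zero_le, hk.le⟩)]
    _ ≤ ∑ k ∈ Finset.range n, ∫ t in (0 : ℝ)..1, |F (k + 1) t - F k t| :=
        Finset.sum_le_sum fun k _ => intervalIntegral.abs_integral_le_integral_abs zero_le_one
    _ = ∫ t in (0 : ℝ)..1, ∑ k ∈ Finset.range n, |F (k + 1) t - F k t| :=
        (intervalIntegral.integral_finsetSum hdiff).symm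
    _ ≤ ∫ _ in (0 : ℝ)..1, (eVariationOn φ s).toReal :=
        intervalIntegral.integral_mono_on zero_le_one
          (by simpa only [← Finset.sum_fn] using IntervalIntegrable.sum _ hdiff)
          intervalIntegrable_const hpointwise
    _ = (eVariationOn φ s).toReal := by simp

theorem sum_abs_sub_slope_le {f f' : ℝ → ℝ} {a b : ℝ}
    (hf : ∀ y ∈ Icc a b, HasDerivWithinAt f (f' y) (Icc a b) y)
    (hbv : BoundedVariationOn f' (Icc a b)) {x : ℝ} (hx : x ∈ Icc a b) {p : ℕ → ℝ}
    {n : ℕ} (hp : MonotoneOn p (Icc 0 n)) (hps : ∀ k ∈ Icc 0 n, p k ∈ Icc a b)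
    (hpx : ∀ k ∈ Icc 0 n, p k ≠ x) :
    ∑ k ∈ Finset.range n, |slope f x (p (k + 1)) - slope f x (p k)| ≤
      (eVariationOn f' (Icc a b)).toReal := by
  have hint : IntervalIntegrable f' volume a b :=
    BoundedVariationOn.intervalIntegrable (by rwa [uIcc_of_le (hx.1.trans hx.2)])
  have hslope : ∀ k ∈ Icc 0 n,
      slope f x (p k) = ∫ t in (0 : ℝ)..1, f' (x + (p k - x) * t) := fun k hk =>
    slope_eq_integral_comp_add_sub_mul hf hint hx (hps k hk) (hpx k hk)
  refine le_of_eq_of_le (Finset.sum_congr rfl fun k hk => ?_)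
    (sum_abs_sub_integral_comp_add_sub_mul_le hbv (convex_Icc a b) hx hp hps)
  have hk : k < n := Finset.mem_range.1 hk
  rw [hslope k ⟨k.zero_le, hk.le⟩, hslope (k + 1) ⟨(k + 1).zero_le, hk⟩]

theorem abs_slope_le_of_hasDerivWithinAt {f f' : ℝ → ℝ} {s : Set ℝ} {C : ℝ} (hs : Convex ℝ s)
    (hf : ∀ y ∈ s, HasDerivWithinAt f (f' y) s y) (hC : ∀ y ∈ s, |f' y| ≤ C) {x p : ℝ}
    (hx : x ∈ s) (hp : p ∈ s) : |slope f x p| ≤ C := by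
  rcases eq_or_ne p x with rfl | hpx
  · simpa using (abs_nonneg _).trans (hC p hp)
  · rw [slope_def_field, abs_div, div_le_iff₀ (abs_pos.2 (sub_ne_zero.2 hpx))]
    exact hs.norm_image_sub_le_of_norm_hasDerivWithin_le hf hC hx hp

theorem Ofun_eq_slope (f : ℝ → ℝ) {x : ℝ} (hx : x ∈ Ioo (-1 : ℝ) 1) :
    Ofun f x = (slope f x 1 - slope f x (-1)) / 2 := by
  have h1 : x - 1 ≠ 0 := by linarith [hx.2]
  have h2 : x + 1 ≠ 0 := by linarith [hx.1]
  have h1' : 1 - x ≠ 0 := by linarith [hx.2]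
  have h2' : -1 - x ≠ 0 := by linarith [hx.1]
  rw [Ofun, slope_def_field, slope_def_field]
  field_simp
  ring

theorem Efun_eq_slope (f : ℝ → ℝ) {x : ℝ} (hx : x ∈ Ioo (-1 : ℝ) 1) :
    Efun f x = -(slope f x 1 + slope f x (-1)) / 2 := by
  have h1 : x - 1 ≠ 0 := by linarith [hx.2]
  have h2 : x + 1 ≠ 0 := by linarith [hx.1]
  have h1' : 1 - x ≠ 0 := by linarith [hx.2]
  have h2' : -1 - x ≠ 0 := by linarith [hx.1]
  rw [Efun, slope_def_field, slope_def_field]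
  field_simp
  ring

theorem abs_slope_add_neg_one_pow_mul_slope_le (f : ℝ → ℝ) (n : ℕ) {x : ℝ}
    (hx : x ∈ Ioo (-1 : ℝ) 1) :
    |slope f x (-1) + (-1) ^ n * slope f x 1| / 2 ≤ max |Ofun f x| |Efun f x| := by
  rcases n.even_or_odd with hn | hn
  · refine le_max_of_le_right (le_of_eq ?_)
    rw [Efun_eq_slope f hx, hn.neg_one_pow, abs_div, abs_neg, abs_two, one_mul, add_comm]
  · refine le_max_of_le_left (le_of_eq ?_)
    rw [Ofun_eq_slope f hx, hn.neg_one_pow, abs_div, abs_two, ← abs_neg]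
    ring_nf

theorem max_abs_Ofun_Efun_le_iSup {f f' : ℝ → ℝ}
    (hderiv : ∀ y ∈ Icc (-1 : ℝ) 1, HasDerivWithinAt f (f' y) (Icc (-1 : ℝ) 1) y)
    (hbv : BoundedVariationOn f' (Icc (-1 : ℝ) 1)) {x : ℝ} (hx : x ∈ Ioo (-1 : ℝ) 1) :
    max |Ofun f x| |Efun f x| ≤
      max (⨆ y : Ioo (-1 : ℝ) 1, |Ofun f y|) (⨆ y : Ioo (-1 : ℝ) 1, |Efun f y|) := by
  set C := |f' (-1)| + (eVariationOn f' (Icc (-1 : ℝ) 1)).toReal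
  have hm1 : (-1 : ℝ) ∈ Icc (-1 : ℝ) 1 := by norm_num
  have hslope : ∀ y ∈ Ioo (-1 : ℝ) 1, ∀ p ∈ Icc (-1 : ℝ) 1, |slope f y p| ≤ C :=
    fun y hy p hp => abs_slope_le_of_hasDerivWithinAt (convex_Icc _ _) hderiv
      (fun z hz => hbv.abs_le_abs_add hm1 hz) (Ioo_subset_Icc_self hy) hp
  have hO : BddAbove (Set.range fun y : Ioo (-1 : ℝ) 1 => |Ofun f y|) := by
    refine ⟨C, forall_mem_range.2 fun y => ?_⟩
    rw [Ofun_eq_slope f y.2, abs_div, abs_two, div_le_iff₀ two_pos]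
    linarith [abs_sub (slope f y 1) (slope f y (-1)), hslope y y.2 1 (by norm_num),
      hslope y y.2 (-1) hm1]
  have hE : BddAbove (Set.range fun y : Ioo (-1 : ℝ) 1 => |Efun f y|) := by
    refine ⟨C, forall_mem_range.2 fun y => ?_⟩
    rw [Efun_eq_slope f y.2, abs_div, abs_neg, abs_two, div_le_iff₀ two_pos]
    linarith [abs_add_le (slope f y 1) (slope f y (-1)), hslope y y.2 1 (by norm_num),
      hslope y y.2 (-1) hm1]
  exact max_le_max (le_ciSup hO ⟨x, hx⟩) (le_ciSup hE ⟨x, hx⟩)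

theorem berrut_sub_eq {f : ℝ → ℝ} {n : ℕ} {x : ℝ} (hnode : ¬ isNode n x) (hD : Dden n x ≠ 0) :
    berrut f n x - f x =
      -(∑ k ∈ Finset.range (n + 1), (-1) ^ k * slope f x (node n k)) / Dden n x := by
  rw [berrut, if_neg hnode, div_sub' hD, Nnum, Dden, Finset.sum_mul, ← Finset.sum_sub_distrib,
    ← Finset.sum_neg_distrib]
  congr 1
  refine Finset.sum_congr rfl fun k _ => ?_
  rw [slope_def_field, ← neg_sub x, div_neg]
  ring

theorem mul_abs_berrut_sub_le {f f' : ℝ → ℝ}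
    (hderiv : ∀ y ∈ Icc (-1 : ℝ) 1, HasDerivWithinAt f (f' y) (Icc (-1 : ℝ) 1) y)
    (hbv : BoundedVariationOn f' (Icc (-1 : ℝ) 1)) {n : ℕ} (hn : 1 ≤ n) {x : ℝ}
    (hx : x ∈ Ioo (-1 : ℝ) 1) (hnode : ¬ isNode n x) :
    n * |berrut f n x - f x| ≤
      |slope f x (-1) + (-1) ^ n * slope f x 1| / 2 +
        (eVariationOn f' (Icc (-1 : ℝ) 1)).toReal / 2 := by
  set S := ∑ k ∈ Finset.range (n + 1), (-1) ^ k * slope f x (node n k)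
  have hD := le_abs_Dden hn hx hnode
  have hDpos : 0 < |Dden n x| := lt_of_lt_of_le (by positivity) hD
  have hS := abs_alternating_sum_le (fun k => slope f x (node n k)) n
  simp only [node_zero, node_self hn] at hS
  have hvar := sum_abs_sub_slope_le hderiv hbv (Ioo_subset_Icc_self hx)
    ((node_monotone n).monotoneOn _) (fun k hk => node_mem_Icc hn hk.2)
    (fun k hk h => hnode ⟨k, hk.2, h.symm⟩)
  calc (n : ℝ) * |berrut f n x - f x| = n / |Dden n x| * |S| := by
        rw [berrut_sub_eq hnode (abs_pos.1 hDpos), abs_div, abs_neg]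
        ring
    _ ≤ |S| := mul_le_of_le_one_left (abs_nonneg _) (div_le_one_of_le₀ hD hDpos.le)
    _ ≤ _ := by linarith

/-- if `f ∈ BV¹` then for every `n ≥ 1`,
`n ‖B_n f - f‖_∞ ≤ T_{f'}[-1,1]/2 + max(‖O(f)‖_∞, ‖E(f)‖_∞)`. -/
theorem statement10 (f f' : ℝ → ℝ)
    (hderiv : ∀ x ∈ Set.Icc (-1 : ℝ) 1, HasDerivWithinAt f (f' x) (Set.Icc (-1 : ℝ) 1) x)
    (hbv : BoundedVariationOn f' (Set.Icc (-1 : ℝ) 1)) (n : ℕ) (hn : 1 ≤ n) :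
    (n : ℝ) * ⨆ x : Set.Icc (-1 : ℝ) 1, |berrut f n (x : ℝ) - f (x : ℝ)| ≤
      (eVariationOn f' (Set.Icc (-1 : ℝ) 1)).toReal / 2 +
        max (⨆ x : Set.Ioo (-1 : ℝ) 1, |Ofun f (x : ℝ)|)
            (⨆ x : Set.Ioo (-1 : ℝ) 1, |Efun f (x : ℝ)|) := by
  have hM : 0 ≤ max (⨆ x : Ioo (-1 : ℝ) 1, |Ofun f (x : ℝ)|)
      (⨆ x : Ioo (-1 : ℝ) 1, |Efun f (x : ℝ)|) :=
    le_max_of_le_left (Real.iSup_nonneg fun _ => abs_nonneg _)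
  rw [Real.mul_iSup_of_nonneg n.cast_nonneg]
  refine Real.iSup_le (fun ⟨x, hx⟩ => ?_) (by positivity)
  by_cases hnode : isNode n x
  · simp only [berrut, if_pos hnode, sub_self, abs_zero, mul_zero]
    positivity
  have hxI := mem_Ioo_of_not_isNode hn hx hnode
  linarith [mul_abs_berrut_sub_le hderiv hbv hn hxI hnode,
    abs_slope_add_neg_one_pow_mul_slope_le f n hxI, max_abs_Ofun_Efun_le_iSup hderiv hbv hxI]
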